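/- Let L be a Lie algebra over R_k, free as an R_k-module, with residue-field reduction L̄. Then L admits a lift to a Lie algebra over R_{k+1} (a free R_{k+1}-Lie algebra with a surjective bracket-preserving map onto L inducing an isomorphism mod π^k) if and only if the obstruction class [J] ∈ H³(L̄, ad) vanishes. -/

import Mathlib

/-!
Two brackets on `B` lifting the bracket of `L` differ by a bilinear map with values in `π^k B`,
i.e. by `π^k f` for a 2-cochain `f` on `L̄`, because `x̄ ↦ π^k x` identifies `L̄` with `π^k B`
when `B` is free. Since `k ≥ 1`, `π^k f` vanishes as soon as one argument lies in `π^k B ⊆ πB`,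
so the Jacobiator of `br + π^k f` is the first-order expression `π^k (J - δf)`. Hence a Lie lift
exists iff `J = δf` for some alternating `f`.
-/

open Pointwise

/-- `Rmod R π m` is the quotient ring `R/π^m R`. -/
abbrev Rmod (R : Type) [CommRing R] (π : R) (m : ℕ) : Type :=
  R ⧸ Ideal.span {π ^ m}

section Setup

variable (R : Type) [CommRing R] (π : R) (k : ℕ)
variable (B : Type) [AddCommGroup B] [Module (Rmod R π (k + 1)) B]

/-- The image of `π` in `R_{k+1}`. -/
noncomputable abbrev pbar : Rmod R π (k + 1) := Ideal.Quotient.mk _ π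

/-- The submodule `π^k B` of `B`. -/
noncomputable abbrev pikB : Submodule (Rmod R π (k + 1)) B :=
  (pbar R π k) ^ k • (⊤ : Submodule (Rmod R π (k + 1)) B)

/-- The submodule `π B` of `B`. -/
noncomputable abbrev piB : Submodule (Rmod R π (k + 1)) B :=
  (pbar R π k) • (⊤ : Submodule (Rmod R π (k + 1)) B)

/-- `L = B/π^k B`, the reduction of `B` to a module over `R_k`. -/
noncomputable abbrev Lred := B ⧸ pikB R π k B

/-- `L̄ = B/πB`, the reduction of `B` to a vector space over the residue field. -/
noncomputable abbrev Lbar := B ⧸ piB R π k B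

/-- The reduction map `mod : B → L = B/π^k B`. -/
noncomputable abbrev modk : B →ₗ[Rmod R π (k + 1)] Lred R π k B :=
  (pikB R π k B).mkQ

/-- The reduction map `λ : B → L̄ = B/πB`. -/
noncomputable abbrev lam : B →ₗ[Rmod R π (k + 1)] Lbar R π k B :=
  (piB R π k B).mkQ

/-- `ψ : L̄ → B`, the map sending `x mod πB` to `π^k x`; its (corestriction to `π^k B`)
is the inverse of the canonical isomorphism `χ : π^k B → L̄`. -/
noncomputable def psi : Lbar R π k B →ₗ[Rmod R π (k + 1)] B :=
  Submodule.liftQ _ ((pbar R π k) ^ k • (LinearMap.id : B →ₗ[Rmod R π (k + 1)] B))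
    (by
      intro x hx
      rw [← SetLike.mem_coe, Submodule.coe_pointwise_smul, Set.mem_smul_set] at hx
      obtain ⟨y, -, rfl⟩ := hx
      have h0 : (pbar R π k) ^ k * pbar R π k = 0 := by
        rw [← pow_succ, ← map_pow, Ideal.Quotient.eq_zero_iff_mem]
        exact Ideal.mem_span_singleton_self _
      simp only [LinearMap.mem_ker, LinearMap.smul_apply, LinearMap.id_apply, smul_smul]
      rw [h0, zero_smul])

@[simp] theorem psi_apply (x : B) :
    psi R π k B (lam R π k B x) = ((pbar R π k) ^ k) • x := rfl

end Setup

section Bilinear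

variable {S M : Type*} [CommRing S] [AddCommGroup M] [Module S M]

def jacobiator (b : M →ₗ[S] M →ₗ[S] M) (x y z : M) : M :=
  b (b x y) z + b (b y z) x + b (b z x) y

/-- The Chevalley–Eilenberg differential of the 2-cochain `c`, with values in the adjoint
representation of the bracket `b`. -/
def ceCoboundary (b c : M →ₗ[S] M →ₗ[S] M) (x y z : M) : M :=
  b x (c y z) - b y (c x z) + b z (c x y) - c (b x y) z + c (b x z) y - c (b y z) x

theorem jacobiator_add (b c : M →ₗ[S] M →ₗ[S] M) (hb : b.IsAlt) (hc : c.IsAlt)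
    (hcc : ∀ u v w, c (c u v) w = 0) (x y z : M) :
    jacobiator (b + c) x y z = jacobiator b x y z - ceCoboundary b c x y z := by
  simp only [jacobiator, ceCoboundary, LinearMap.add_apply, map_add, hcc]
  rw [← hb.neg z (c x y), ← hb.neg x (c y z), ← hb.neg y (c z x), ← hb.neg x z,
    ← hc.neg x z]
  simp only [map_neg, LinearMap.neg_apply]
  abel

end Bilinear

theorem smul_eq_zero_of_quotient_smul_top {S M : Type*} [CommRing S] [AddCommGroup M] [Module S M]
    (r : S) (w : M ⧸ r • (⊤ : Submodule S M)) : r • w = 0 := by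
  obtain ⟨x, rfl⟩ := Submodule.mkQ_surjective _ w
  rw [← map_smul, Submodule.mkQ_apply, Submodule.Quotient.mk_eq_zero]
  exact Submodule.smul_mem_pointwise_smul _ _ _ Submodule.mem_top

theorem exists_eq_pbar_mul_of_pbar_pow_mul_eq_zero {R : Type} [CommRing R] [IsDomain R]
    {π : R} (hπ : π ≠ 0) {k : ℕ} (c : Rmod R π (k + 1)) (hc : pbar R π k ^ k * c = 0) :
    ∃ d, c = pbar R π k * d := by
  obtain ⟨a, rfl⟩ := Ideal.Quotient.mk_surjective c
  rw [← map_pow, ← map_mul, Ideal.Quotient.eq_zero_iff_mem, Ideal.mem_span_singleton] at hc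
  obtain ⟨t, ht⟩ := hc
  refine ⟨Ideal.Quotient.mk _ t, ?_⟩
  rw [← map_mul]
  congr 1
  apply mul_left_cancel₀ (pow_ne_zero k hπ)
  rw [ht, pow_succ]
  ring

section Lift

variable {R : Type} [CommRing R] {π : R} {k : ℕ}
variable {B : Type} [AddCommGroup B] [Module (Rmod R π (k + 1)) B]

theorem mem_piB_of_pbar_pow_smul_eq_zero [IsDomain R] (hπ : π ≠ 0)
    [Module.Free (Rmod R π (k + 1)) B] (x : B) (hx : pbar R π k ^ k • x = 0) :
    x ∈ piB R π k B := by
  let b := Module.Free.chooseBasis (Rmod R π (k + 1)) B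
  rw [← b.linearCombination_repr x, Finsupp.linearCombination_apply]
  refine Submodule.finsuppSum_mem _ _ _ _ fun i _ => ?_
  have hcoef : pbar R π k ^ k * b.repr x i = 0 := by
    simpa [smul_eq_mul] using congrArg (fun v => b.repr v i) hx
  obtain ⟨d, hd⟩ := exists_eq_pbar_mul_of_pbar_pow_mul_eq_zero hπ _ hcoef
  rw [hd, mul_smul]
  exact Submodule.smul_mem_pointwise_smul _ _ _ Submodule.mem_top

theorem psi_injective [IsDomain R] (hπ : π ≠ 0) [Module.Free (Rmod R π (k + 1)) B] :
    Function.Injective (psi R π k B) := by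
  rw [injective_iff_map_eq_zero]
  intro w hw
  obtain ⟨x, rfl⟩ := Submodule.mkQ_surjective _ w
  rw [psi_apply] at hw
  rw [Submodule.mkQ_apply, Submodule.Quotient.mk_eq_zero]
  exact mem_piB_of_pbar_pow_smul_eq_zero hπ x hw

theorem modk_psi (w : Lbar R π k B) : modk R π k B (psi R π k B w) = 0 := by
  obtain ⟨x, rfl⟩ := Submodule.mkQ_surjective _ w
  rw [psi_apply, Submodule.mkQ_apply, Submodule.Quotient.mk_eq_zero]
  exact Submodule.smul_mem_pointwise_smul _ _ _ Submodule.mem_top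

theorem mem_range_psi_of_modk_eq_zero (v : B) (hv : modk R π k B v = 0) :
    v ∈ LinearMap.range (psi R π k B) := by
  rw [Submodule.mkQ_apply, Submodule.Quotient.mk_eq_zero,
    Submodule.mem_smul_pointwise_iff_exists] at hv
  obtain ⟨x, -, rfl⟩ := hv
  exact ⟨lam R π k B x, psi_apply R π k B x⟩

theorem lam_psi (hk : 1 ≤ k) (w : Lbar R π k B) : lam R π k B (psi R π k B w) = 0 := by
  obtain ⟨x, rfl⟩ := Submodule.mkQ_surjective _ w
  have hpow : pbar R π k ^ k = pbar R π k * pbar R π k ^ (k - 1) := by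
    rw [← pow_succ', Nat.sub_add_cancel hk]
  rw [psi_apply, Submodule.mkQ_apply, Submodule.Quotient.mk_eq_zero, hpow, mul_smul]
  exact Submodule.smul_mem_pointwise_smul _ _ _ Submodule.mem_top

noncomputable def liftForm
    (f : Lbar R π k B →ₗ[Rmod R π (k + 1)] Lbar R π k B →ₗ[Rmod R π (k + 1)] Lbar R π k B) :
    B →ₗ[Rmod R π (k + 1)] B →ₗ[Rmod R π (k + 1)] B :=
  (f.compl₁₂ (lam R π k B) (lam R π k B)).compr₂ (psi R π k B)

@[simp] theorem liftForm_apply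
    (f : Lbar R π k B →ₗ[Rmod R π (k + 1)] Lbar R π k B →ₗ[Rmod R π (k + 1)] Lbar R π k B)
    (x y : B) : liftForm f x y = psi R π k B (f (lam R π k B x) (lam R π k B y)) := rfl

/-- `D` takes values in the image of the injective map `ψ`, and the resulting form `B × B → L̄`
kills `πB` because `L̄` is killed by `π`. -/
theorem exists_liftForm_eq [IsDomain R] (hπ : π ≠ 0) [Module.Free (Rmod R π (k + 1)) B]
    (D : B →ₗ[Rmod R π (k + 1)] B →ₗ[Rmod R π (k + 1)] B)
    (hD : ∀ x y, modk R π k B (D x y) = 0) : ∃ f, liftForm f = D := by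
  let g := D.codRestrict₂ (psi R π k B) (psi_injective hπ)
    fun x y => mem_range_psi_of_modk_eq_zero _ (hD x y)
  have hg : ∀ x y, psi R π k B (g x y) = D x y := LinearMap.codRestrict₂_apply _ _ _ _
  have hleft : piB R π k B ≤ LinearMap.ker g := by
    intro x hx
    obtain ⟨m, -, rfl⟩ := (Submodule.mem_smul_pointwise_iff_exists _ _ _).1 hx
    ext y
    simp only [map_smul, LinearMap.smul_apply, LinearMap.zero_apply]
    exact smul_eq_zero_of_quotient_smul_top _ _
  have hright : piB R π k B ≤ LinearMap.ker g.flip := by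
    intro y hy
    obtain ⟨m, -, rfl⟩ := (Submodule.mem_smul_pointwise_iff_exists _ _ _).1 hy
    ext x
    simp only [map_smul, LinearMap.smul_apply, LinearMap.zero_apply]
    exact smul_eq_zero_of_quotient_smul_top _ _
  exact ⟨g.liftQ₂ _ _ hleft hright, LinearMap.ext₂ hg⟩

theorem isAlt_liftForm_iff [IsDomain R] (hπ : π ≠ 0) [Module.Free (Rmod R π (k + 1)) B]
    (f : Lbar R π k B →ₗ[Rmod R π (k + 1)] Lbar R π k B →ₗ[Rmod R π (k + 1)] Lbar R π k B) :
    (liftForm f).IsAlt ↔ f.IsAlt := by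
  refine ⟨fun h v => ?_, fun h v => by rw [liftForm_apply, h, map_zero]⟩
  obtain ⟨x, rfl⟩ := Submodule.mkQ_surjective _ v
  exact psi_injective hπ (by rw [← liftForm_apply, h, map_zero])

theorem liftForm_liftForm (hk : 1 ≤ k)
    (f : Lbar R π k B →ₗ[Rmod R π (k + 1)] Lbar R π k B →ₗ[Rmod R π (k + 1)] Lbar R π k B)
    (x y z : B) : liftForm f (liftForm f x y) z = 0 := by
  rw [liftForm_apply, liftForm_apply, lam_psi hk, map_zero, LinearMap.zero_apply, map_zero]

variable (br : B →ₗ[Rmod R π (k + 1)] B →ₗ[Rmod R π (k + 1)] B)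
  (brb : Lbar R π k B →ₗ[Rmod R π (k + 1)] Lbar R π k B →ₗ[Rmod R π (k + 1)] Lbar R π k B)

theorem psi_brb_lam
    (hbrb : ∀ x y : B, lam R π k B (br x y) = brb (lam R π k B x) (lam R π k B y))
    (x : B) (w : Lbar R π k B) :
    psi R π k B (brb (lam R π k B x) w) = br x (psi R π k B w) := by
  obtain ⟨y, rfl⟩ := Submodule.mkQ_surjective _ w
  rw [← hbrb, psi_apply, psi_apply, map_smul]

theorem psi_ceCoboundary
    (hbrb : ∀ x y : B, lam R π k B (br x y) = brb (lam R π k B x) (lam R π k B y))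
    (f : Lbar R π k B →ₗ[Rmod R π (k + 1)] Lbar R π k B →ₗ[Rmod R π (k + 1)] Lbar R π k B)
    (x y z : B) :
    psi R π k B (ceCoboundary brb f (lam R π k B x) (lam R π k B y) (lam R π k B z)) =
      ceCoboundary br (liftForm f) x y z := by
  simp only [ceCoboundary, map_sub, map_add, psi_brb_lam br brb hbrb, ← hbrb, liftForm_apply]

/-- The Jacobiator of `br + π^k f` is `π^k (J - δf)`, and multiplication by `π^k` is injective
on `L̄`. -/
theorem jacobiator_add_liftForm_eq_zero_iff [IsDomain R] (hπ : π ≠ 0)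
    [Module.Free (Rmod R π (k + 1)) B] (hk : 1 ≤ k) (halt : br.IsAlt)
    (hbrb : ∀ x y : B, lam R π k B (br x y) = brb (lam R π k B x) (lam R π k B y))
    (J : Lbar R π k B →ₗ[Rmod R π (k + 1)] Lbar R π k B →ₗ[Rmod R π (k + 1)]
      Lbar R π k B →ₗ[Rmod R π (k + 1)] Lbar R π k B)
    (hJ : ∀ x y z : B, psi R π k B (J (lam R π k B x) (lam R π k B y) (lam R π k B z)) =
      jacobiator br x y z)
    (f : Lbar R π k B →ₗ[Rmod R π (k + 1)] Lbar R π k B →ₗ[Rmod R π (k + 1)] Lbar R π k B)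
    (hf : f.IsAlt) :
    (∀ x y z, jacobiator (br + liftForm f) x y z = 0) ↔
      ∀ u v w, J u v w = ceCoboundary brb f u v w := by
  have hjac : ∀ x y z, jacobiator (br + liftForm f) x y z = psi R π k B
      (J (lam R π k B x) (lam R π k B y) (lam R π k B z) -
        ceCoboundary brb f (lam R π k B x) (lam R π k B y) (lam R π k B z)) := by
    intro x y z
    rw [jacobiator_add br _ halt ((isAlt_liftForm_iff hπ f).2 hf) (liftForm_liftForm hk f),
      map_sub, hJ, psi_ceCoboundary br brb hbrb]
  simp only [hjac, ← sub_eq_zero (a := J _ _ _)]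
  constructor
  · intro h u v w
    obtain ⟨x, rfl⟩ := Submodule.mkQ_surjective _ u
    obtain ⟨y, rfl⟩ := Submodule.mkQ_surjective _ v
    obtain ⟨z, rfl⟩ := Submodule.mkQ_surjective _ w
    exact psi_injective hπ (by rw [h, map_zero])
  · intro h x y z
    rw [h, map_zero]

end Lift

theorem stmt_9_general (R : Type) [CommRing R] [IsDomain R]
    (π : R) (hπ : Irreducible π) (k : ℕ) (hk : 1 ≤ k)
    (B : Type) [AddCommGroup B] [Module (Rmod R π (k + 1)) B]
    [Module.Free (Rmod R π (k + 1)) B]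
    (brL : Lred R π k B →ₗ[Rmod R π (k + 1)] Lred R π k B →ₗ[Rmod R π (k + 1)] Lred R π k B)
    (br : B →ₗ[Rmod R π (k + 1)] B →ₗ[Rmod R π (k + 1)] B)
    (halt : ∀ v, br v v = 0)
    (hlift : ∀ x y : B, modk R π k B (br x y) = brL (modk R π k B x) (modk R π k B y))
    (brb : Lbar R π k B →ₗ[Rmod R π (k + 1)] Lbar R π k B →ₗ[Rmod R π (k + 1)] Lbar R π k B)
    (hbrb : ∀ x y : B, lam R π k B (br x y) = brb (lam R π k B x) (lam R π k B y))
    (J : Lbar R π k B →ₗ[Rmod R π (k + 1)] Lbar R π k B →ₗ[Rmod R π (k + 1)]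
      Lbar R π k B →ₗ[Rmod R π (k + 1)] Lbar R π k B)
    (hJ : ∀ x y z : B, psi R π k B (J (lam R π k B x) (lam R π k B y) (lam R π k B z)) =
      br (br x y) z + br (br y z) x + br (br z x) y)
    :
    (∃ br' : B →ₗ[Rmod R π (k + 1)] B →ₗ[Rmod R π (k + 1)] B,
      (∀ v, br' v v = 0) ∧
      (∀ x y z : B, br' (br' x y) z + br' (br' y z) x + br' (br' z x) y = 0) ∧
      (∀ x y : B, modk R π k B (br' x y) = brL (modk R π k B x) (modk R π k B y))) ↔
    (∃ form : Lbar R π k B →ₗ[Rmod R π (k + 1)] Lbar R π k B →ₗ[Rmod R π (k + 1)]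
        Lbar R π k B,
      (∀ v, form v v = 0) ∧
      ∀ x y z : Lbar R π k B,
        J x y z =
          brb x (form y z) - brb y (form x z) + brb z (form x y)
            - form (brb x y) z + form (brb x z) y - form (brb y z) x) := by
  have hπ0 := hπ.ne_zero
  have hJacobi := jacobiator_add_liftForm_eq_zero_iff br brb hπ0 hk halt hbrb J hJ
  constructor
  · rintro ⟨br', halt', hjac', hlift'⟩
    obtain ⟨f, hf⟩ := exists_liftForm_eq hπ0 (br' - br) fun x y => by
      rw [LinearMap.sub_apply, LinearMap.sub_apply, map_sub, hlift', hlift, sub_self]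
    rw [eq_sub_iff_add_eq'] at hf
    subst hf
    have hfalt : f.IsAlt := (isAlt_liftForm_iff hπ0 f).1 fun v => by
      simpa only [LinearMap.add_apply, halt v, zero_add] using halt' v
    exact ⟨f, hfalt, (hJacobi f hfalt).1 hjac'⟩
  · rintro ⟨f, hfalt, hJf⟩
    refine ⟨br + liftForm f, fun v => ?_, (hJacobi f hfalt).2 hJf, fun x y => ?_⟩
    · rw [LinearMap.add_apply, LinearMap.add_apply, halt, liftForm_apply, hfalt, map_zero,
        add_zero]
    · rw [LinearMap.add_apply, LinearMap.add_apply, map_add, hlift, liftForm_apply, modk_psi,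
        add_zero]

/-- The Lie algebra `L = B/π^k B` over `R_k` admits a Lie algebra lift over
`R_{k+1}` (an alternating bracket on the free module `B` satisfying the Jacobi identity
and reducing mod `π^k` to the bracket of `L`) if and only if the obstruction class
`[J] ∈ H³(L̄, ad)` vanishes, i.e. the Jacobiator 3-cocycle `J` of a bracket algebra lift
is a Chevalley–Eilenberg coboundary. -/
theorem stmt_9 (R : Type) [CommRing R] [IsDomain R] [IsDiscreteValuationRing R]
    (π : R) (hπ : Irreducible π) (k : ℕ) (hk : 1 ≤ k)
    (B : Type) [AddCommGroup B] [Module (Rmod R π (k + 1)) B]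
    [Module.Free (Rmod R π (k + 1)) B] [Module.Finite (Rmod R π (k + 1)) B]
    (brL : Lred R π k B →ₗ[Rmod R π (k + 1)] Lred R π k B →ₗ[Rmod R π (k + 1)] Lred R π k B)
    (haltL : ∀ v, brL v v = 0)
    (hjacL : ∀ x y z : Lred R π k B, brL (brL x y) z + brL (brL y z) x + brL (brL z x) y = 0)
    (br : B →ₗ[Rmod R π (k + 1)] B →ₗ[Rmod R π (k + 1)] B)
    (halt : ∀ v, br v v = 0)
    (hlift : ∀ x y : B, modk R π k B (br x y) = brL (modk R π k B x) (modk R π k B y))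
    (brb : Lbar R π k B →ₗ[Rmod R π (k + 1)] Lbar R π k B →ₗ[Rmod R π (k + 1)] Lbar R π k B)
    (hbrb : ∀ x y : B, lam R π k B (br x y) = brb (lam R π k B x) (lam R π k B y))
    (J : Lbar R π k B →ₗ[Rmod R π (k + 1)] Lbar R π k B →ₗ[Rmod R π (k + 1)]
      Lbar R π k B →ₗ[Rmod R π (k + 1)] Lbar R π k B)
    (hJ : ∀ x y z : B, psi R π k B (J (lam R π k B x) (lam R π k B y) (lam R π k B z)) =
      br (br x y) z + br (br y z) x + br (br z x) y)
    :
    (∃ br' : B →ₗ[Rmod R π (k + 1)] B →ₗ[Rmod R π (k + 1)] B,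
      (∀ v, br' v v = 0) ∧
      (∀ x y z : B, br' (br' x y) z + br' (br' y z) x + br' (br' z x) y = 0) ∧
      (∀ x y : B, modk R π k B (br' x y) = brL (modk R π k B x) (modk R π k B y))) ↔
    (∃ form : Lbar R π k B →ₗ[Rmod R π (k + 1)] Lbar R π k B →ₗ[Rmod R π (k + 1)]
        Lbar R π k B,
      (∀ v, form v v = 0) ∧
      ∀ x y z : Lbar R π k B,
        J x y z =
          brb x (form y z) - brb y (form x z) + brb z (form x y)
            - form (brb x y) z + form (brb x z) y - form (brb y z) x) :=
  stmt_9_general R π hπ k hk B brL br halt hlift brb hbrb J hJ
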